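/- Let R be a right-flat right-linear TRS and E a permutative theory. If R/E is non-terminating and there is no non-terminating R/E-derivation starting from a constant, then there is an infinite derivation t_0 →_{R∪E} t_1 →_{R∪E} … with infinitely many R-steps such that: (a) no infinite such derivation starts from a proper subterm of t_0; (b) no step in the derivation applies a collapsing rule at the root position; and (c) infinitely many steps occur at the root position. -/

import Mathlib

/-- First-order terms over function symbols `F` and variables `V`. -/
inductive Tm (F V : Type) : Type
  | var : V → Tm F V
  | app : F → List (Tm F V) → Tm F V

namespace Tm

variable {F V : Type}

/-- Height of a term: 0 for variables and constants. -/
def height : Tm F V → ℕ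
  | var _ => 0
  | app _ ts => ts.attach.foldr (fun t m => max (height t.1 + 1) m) 0
decreasing_by all_goals (simp_wf; have := List.sizeOf_lt_of_mem t.2; omega)

/-- Size (number of positions) of a term. -/
def size : Tm F V → ℕ
  | var _ => 1
  | app _ ts => 1 + (ts.attach.map (fun t => size t.1)).sum
decreasing_by all_goals (simp_wf; have := List.sizeOf_lt_of_mem t.2; omega)

/-- Apply a substitution. -/
def subst (σ : V → Tm F V) : Tm F V → Tm F V
  | var x => σ x
  | app f ts => app f (ts.attach.map (fun t => subst σ t.1))
decreasing_by all_goals (simp_wf; have := List.sizeOf_lt_of_mem t.2; omega)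

/-- List of variable occurrences. -/
def varList : Tm F V → List V
  | var x => [x]
  | app _ ts => (ts.attach.map (fun t => varList t.1)).flatten
decreasing_by all_goals (simp_wf; have := List.sizeOf_lt_of_mem t.2; omega)

/-- List of function-symbol occurrences. -/
def symList : Tm F V → List F
  | var _ => []
  | app f ts => f :: (ts.attach.map (fun t => symList t.1)).flatten
decreasing_by all_goals (simp_wf; have := List.sizeOf_lt_of_mem t.2; omega)

/-- The subterm at a position (positions are lists of argument indices). -/
def subAt : Tm F V → List ℕ → Option (Tm F V)
  | t, [] => some t
  | var _, _ :: _ => none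
  | app _ ts, i :: p => match ts[i]? with
      | some u => subAt u p
      | none => none

/-- Replace the subterm at a position. -/
def replAt : Tm F V → List ℕ → Tm F V → Option (Tm F V)
  | _, [], s => some s
  | var _, _ :: _, _ => none
  | app f ts, i :: p, s => match ts[i]? with
      | some u => (replAt u p s).map (fun u' => app f (ts.set i u'))
      | none => none

/-- `p` is a position of `t`. -/
def IsPos (t : Tm F V) (p : List ℕ) : Prop := (t.subAt p).isSome

/-- A term is a constant if it is a nullary function application. -/
def IsConst (t : Tm F V) : Prop := ∃ f : F, t = app f []

def Ground (t : Tm F V) : Prop := t.varList = []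

/-- A term is linear if each variable occurs at most once. -/
def Linear (t : Tm F V) : Prop := t.varList.Nodup

/-- A term is flat if its height is at most 1. -/
def Flat (t : Tm F V) : Prop := t.height ≤ 1

/-- A term is shallow if all variables occur at depth at most 1. -/
def Shallow (t : Tm F V) : Prop :=
  ∀ (p : List ℕ) (x : V), t.subAt p = some (var x) → p.length ≤ 1

end Tm

/-- A rewrite rule. -/
structure Rule (F V : Type) where
  lhs : Tm F V
  rhs : Tm F V

namespace Rule

variable {F V : Type}

/-- Standard well-formedness: the lhs is not a variable and variables of the
rhs occur in the lhs. -/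
def WF (r : Rule F V) : Prop :=
  (∀ x : V, r.lhs ≠ Tm.var x) ∧ ∀ x ∈ r.rhs.varList, x ∈ r.lhs.varList

def RightFlat (r : Rule F V) : Prop := r.rhs.Flat
def RightLinear (r : Rule F V) : Prop := r.rhs.Linear
def RightShallow (r : Rule F V) : Prop := r.rhs.Shallow
def FlatRule (r : Rule F V) : Prop := r.lhs.Flat ∧ r.rhs.Flat
def ShallowRule (r : Rule F V) : Prop := r.lhs.Shallow ∧ r.rhs.Shallow
def Collapsing (r : Rule F V) : Prop := ∃ x : V, r.rhs = Tm.var x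

/-- A permutative rule: linear, flat, height-preserving and variable-preserving. -/
def Permutative (r : Rule F V) : Prop :=
  r.WF ∧ r.lhs.Linear ∧ r.rhs.Linear ∧ r.lhs.Flat ∧ r.rhs.Flat ∧
    r.lhs.height = r.rhs.height ∧ ∀ x : V, x ∈ r.lhs.varList ↔ x ∈ r.rhs.varList

end Rule

/-- A permutative theory: a symmetric set of permutative rules. -/
def PermutativeTheory {F V : Type} (E : Set (Rule F V)) : Prop :=
  (∀ r ∈ E, r.Permutative) ∧ ∀ r ∈ E, (⟨r.rhs, r.lhs⟩ : Rule F V) ∈ E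

section Rewriting

variable {F V : Type}

/-- One rewrite step with rule `l → r` at position `p` using substitution `σ`. -/
def RewWith (l r : Tm F V) (p : List ℕ) (σ : V → Tm F V) (s t : Tm F V) : Prop :=
  s.subAt p = some (l.subst σ) ∧ s.replAt p (r.subst σ) = some t

/-- One rewrite step with TRS `R` at position `p`. -/
def RewAt (R : Set (Rule F V)) (p : List ℕ) (s t : Tm F V) : Prop :=
  ∃ r ∈ R, ∃ σ : V → Tm F V, RewWith r.lhs r.rhs p σ s t

/-- One rewrite step with TRS `R`. -/
def Rew (R : Set (Rule F V)) (s t : Tm F V) : Prop := ∃ p, RewAt R p s t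

/-- Reachability: reflexive-transitive closure of one-step rewriting. -/
def Reach (R : Set (Rule F V)) : Tm F V → Tm F V → Prop :=
  Relation.ReflTransGen (Rew R)

/-- One rewrite step with `R` modulo `E` : `s →E* · →R · →E* t`. -/
def RewMod (R E : Set (Rule F V)) (s t : Tm F V) : Prop :=
  ∃ u v, Reach E s u ∧ Rew R u v ∧ Reach E v t

/-- `R/E` is terminating from `s`. -/
def TerminatingFrom (R E : Set (Rule F V)) (s : Tm F V) : Prop :=
  ¬ ∃ f : ℕ → Tm F V, f 0 = s ∧ ∀ n, RewMod R E (f n) (f (n + 1))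

/-- `R/E` is terminating. -/
def Terminating (R E : Set (Rule F V)) : Prop :=
  ¬ ∃ f : ℕ → Tm F V, ∀ n, RewMod R E (f n) (f (n + 1))

/-- `t` is reachable from some constant. -/
def FromConst (R : Set (Rule F V)) (t : Tm F V) : Prop :=
  ∃ f : F, Reach R (Tm.app f []) t

/-- The measure `‖t‖`: number of positions of `t` whose subterm is not reachable
from a constant. -/
noncomputable def meas (R : Set (Rule F V)) (t : Tm F V) : ℕ :=
  Nat.card {p : List ℕ // ∃ u, t.subAt p = some u ∧ ¬ FromConst R u}

/-- `t` is a normal form w.r.t. `R/E`. -/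
def NFMod (R E : Set (Rule F V)) (t : Tm F V) : Prop := ¬ ∃ t', RewMod R E t t'

/-- `t` is `R`-irreducible. -/
def NF (R : Set (Rule F V)) (t : Tm F V) : Prop := ¬ ∃ t', Rew R t t'

/-- Innermost rewrite step with `R` (plain rewriting): all proper subterms of the
redex are irreducible. -/
def IRew (R : Set (Rule F V)) (s t : Tm F V) : Prop :=
  ∃ p, RewAt R p s t ∧
    ∀ (q : List ℕ) (w : Tm F V), q ≠ [] → s.subAt (p ++ q) = some w → NF R w

/-- Innermost rewrite step with `R` modulo `E`. -/
def IRewMod (R E : Set (Rule F V)) (s t : Tm F V) : Prop :=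
  ∃ u v, ∃ p : List ℕ, Reach E s u ∧ RewAt R p u v ∧ Reach E v t ∧
    ∀ (q : List ℕ) (w : Tm F V), q ≠ [] → u.subAt (p ++ q) = some w → NFMod R E w

/-- Innermost termination of `R/E`. -/
def ITerminating (R E : Set (Rule F V)) : Prop :=
  ¬ ∃ f : ℕ → Tm F V, ∀ n, IRewMod R E (f n) (f (n + 1))

end Rewriting

section Marking

variable {F V : Type}

/-- A derivation of length `n` with explicit rules, positions and substitutions. -/
def IsDeriv (R : Set (Rule F V)) (n : ℕ) (s : ℕ → Tm F V) (rl : ℕ → Rule F V)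
    (pp : ℕ → List ℕ) (sb : ℕ → V → Tm F V) : Prop :=
  ∀ i < n, rl i ∈ R ∧ RewWith (rl i).lhs (rl i).rhs (pp i) (sb i) (s i) (s (i + 1))

/-- `p'` is strictly below `p̄` : `p̄` is a proper prefix of `p'`. -/
def StrictBelow (pbar p : List ℕ) : Prop := ∃ q, q ≠ [] ∧ p = pbar ++ q

/-- A marking of a derivation. -/
def IsMarking (n : ℕ) (s : ℕ → Tm F V) (rl : ℕ → Rule F V)
    (pp : ℕ → List ℕ) (M : ℕ → List ℕ → Tm F V) : Prop :=
  (∀ p t, (s 0).subAt p = some t → M 0 p = t) ∧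
  ∀ i < n,
    (∀ p, (s (i + 1)).IsPos p → ¬ StrictBelow (pp i) p → M (i + 1) p = M i p) ∧
    (∀ (j : ℕ) (u : Tm F V), (rl i).rhs.subAt [j] = some u → u.IsConst →
        M (i + 1) (pp i ++ [j]) = u) ∧
    (∀ (j : ℕ) (p₁ : List ℕ) (x : V), (rl i).rhs.subAt [j] = some (Tm.var x) →
        (s (i + 1)).IsPos (pp i ++ j :: p₁) →
        ∃ q₀ : List ℕ, (rl i).lhs.subAt q₀ = some (Tm.var x) ∧
          M (i + 1) (pp i ++ j :: p₁) = M i (pp i ++ q₀ ++ p₁))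

end Marking

section WFSig

variable {F V : Type}

/-- Terms respecting the arity function. -/
inductive WFT (ar : F → ℕ) : Tm F V → Prop
  | var (x : V) : WFT ar (Tm.var x)
  | app (f : F) (ts : List (Tm F V)) : ts.length = ar f →
      (∀ t ∈ ts, WFT ar t) → WFT ar (Tm.app f ts)

end WFSig

/-!
Take a term `t₀` of minimal size among the `R/E`-non-terminating ones, so that all its proper
subterms terminate, and unfold an infinite `R/E`-derivation from it into single `R ∪ E`-steps.
Minimality survives every step: right-hand sides are flat and their variables occur in the
left-hand side, so a proper subterm of a contractum is a proper subterm of the redex or a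
constant, and constants terminate. Hence a collapsing root step would produce a proper subterm
of the previous term, which terminates, although every term of the derivation does not. If from
some point on all steps were below the root, the root symbol and its finitely many arguments would
persist, so by pigeonhole one argument would receive infinitely many `R`-steps and would not
terminate, contradicting minimality.
-/

namespace Tm

variable {F V : Type}

@[simp] theorem subAt_nil (t : Tm F V) : t.subAt [] = some t := by cases t <;> rfl

@[simp] theorem replAt_nil (t s : Tm F V) : t.replAt [] s = some s := by cases t <;> rfl

@[simp] theorem subAt_var_cons (x : V) (i : ℕ) (p : List ℕ) :
    (var x : Tm F V).subAt (i :: p) = none := rfl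

@[simp] theorem replAt_var_cons (x : V) (i : ℕ) (p : List ℕ) (s : Tm F V) :
    (var x : Tm F V).replAt (i :: p) s = none := rfl

theorem subAt_app_cons (f : F) (ts : List (Tm F V)) (i : ℕ) (p : List ℕ) :
    (app f ts).subAt (i :: p) = ts[i]?.bind (subAt · p) := by
  rw [subAt]; cases ts[i]? <;> rfl

theorem replAt_app_cons (f : F) (ts : List (Tm F V)) (i : ℕ) (p : List ℕ) (s : Tm F V) :
    (app f ts).replAt (i :: p) s =
      ts[i]?.bind fun u => (u.replAt p s).map fun u' => app f (ts.set i u') := by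
  rw [replAt]; cases ts[i]? <;> rfl

@[simp] theorem subst_var (σ : V → Tm F V) (x : V) : (var x).subst σ = σ x := by rw [subst]

theorem subst_app (σ : V → Tm F V) (f : F) (ts : List (Tm F V)) :
    (app f ts).subst σ = app f (ts.map (subst σ)) := by
  rw [subst]; simp

@[simp] theorem varList_var (x : V) : (var x : Tm F V).varList = [x] := by rw [varList]

theorem varList_app (f : F) (ts : List (Tm F V)) :
    (app f ts).varList = (ts.map varList).flatten := by
  rw [varList]; simp

theorem height_lt_of_mem (f : F) {ts : List (Tm F V)} {t : Tm F V} (ht : t ∈ ts) :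
    t.height < (app f ts).height := by
  induction ts with
  | nil => simp at ht
  | cons a l ih =>
    rw [height, List.attach_cons, List.foldr_cons, List.foldr_map]
    rcases List.mem_cons.1 ht with rfl | ht
    · exact lt_max_of_lt_left (Nat.lt_succ_self _)
    · refine lt_max_of_lt_right ?_
      simpa [height, List.foldr_map] using ih ht

theorem Flat.var_or_const_of_mem {f : F} {ts : List (Tm F V)} (hflat : (app f ts).Flat)
    {t : Tm F V} (ht : t ∈ ts) : (∃ x, t = var x) ∨ ∃ c, t = app c [] := by
  have hlt := height_lt_of_mem f ht
  rcases t with x | ⟨c, _ | ⟨a, as⟩⟩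
  · exact .inl ⟨x, rfl⟩
  · exact .inr ⟨c, rfl⟩
  · have := height_lt_of_mem c (List.mem_cons_self (a := a) (l := as))
    unfold Flat at hflat
    omega

theorem sizeOf_lt_of_subAt {i : ℕ} {q : List ℕ} {t u : Tm F V}
    (h : t.subAt (i :: q) = some u) : sizeOf u < sizeOf t := by
  rcases t with x | ⟨f, ts⟩
  · simp at h
  rw [subAt_app_cons, Option.bind_eq_some_iff] at h
  obtain ⟨w, hw, hwu⟩ := h
  have hlt : sizeOf w < sizeOf (app f ts) := by
    have := List.sizeOf_lt_of_mem (List.mem_of_getElem? hw)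
    simp only [app.sizeOf_spec]
    omega
  cases q with
  | nil => simpa [← Option.some_inj.1 hwu] using hlt
  | cons j q => exact (sizeOf_lt_of_subAt hwu).trans hlt

theorem subAt_append (q p : List ℕ) (s : Tm F V) :
    s.subAt (q ++ p) = (s.subAt q).bind (subAt · p) := by
  induction q generalizing s with
  | nil => simp
  | cons i q ih =>
    rcases s with x | ⟨f, ts⟩
    · simp
    · rw [List.cons_append, subAt_app_cons, subAt_app_cons]
      cases ts[i]? <;> simp [ih]

theorem subAt_replAt {q : List ℕ} {s s' v : Tm F V} (h : s.replAt q v = some s') :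
    s'.subAt q = some v := by
  induction q generalizing s s' with
  | nil => simp_all
  | cons i q ih =>
    rcases s with x | ⟨f, ts⟩
    · simp at h
    · rw [replAt_app_cons, Option.bind_eq_some_iff] at h
      obtain ⟨w, hw, hw'⟩ := h
      rw [Option.map_eq_some_iff] at hw'
      obtain ⟨u', hu', rfl⟩ := hw'
      have hi : i < ts.length := (List.getElem?_eq_some_iff.1 hw).1
      rw [subAt_app_cons, List.getElem?_set_self hi]
      exact ih hu'

theorem replAt_append {q : List ℕ} (p : List ℕ) {s u : Tm F V} (w : Tm F V)
    (h : s.subAt q = some u) :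
    s.replAt (q ++ p) w = (u.replAt p w).bind (s.replAt q ·) := by
  induction q generalizing s with
  | nil => simp_all
  | cons i q ih =>
    rcases s with x | ⟨f, ts⟩
    · simp at h
    · rw [subAt_app_cons, Option.bind_eq_some_iff] at h
      obtain ⟨v, hv, hvu⟩ := h
      simp only [List.cons_append, replAt_app_cons, hv, Option.bind_some, ih hvu]
      cases u.replAt p w <;> rfl

theorem subAt_replAt_of_not_prefix {p q : List ℕ} {s t w : Tm F V}
    (h : s.replAt p w = some t) (hpq : ¬ p <+: q) (hqp : ¬ q <+: p) :
    t.subAt q = s.subAt q := by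
  induction p generalizing q s t with
  | nil => exact absurd List.nil_prefix hpq
  | cons i p ih =>
    rcases q with _ | ⟨j, q⟩
    · exact absurd List.nil_prefix hqp
    rcases s with x | ⟨f, ts⟩
    · simp at h
    rw [replAt_app_cons, Option.bind_eq_some_iff] at h
    obtain ⟨u, hu, hu'⟩ := h
    rw [Option.map_eq_some_iff] at hu'
    obtain ⟨u', hu', rfl⟩ := hu'
    rw [subAt_app_cons, subAt_app_cons]
    by_cases hij : i = j
    · subst hij
      rw [List.getElem?_set_self (List.getElem?_eq_some_iff.1 hu).1, hu]
      simp only [List.cons_prefix_cons, true_and] at hpq hqp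
      simpa using ih hu' hpq hqp
    · rw [List.getElem?_set_ne hij]

theorem subAt_subst (σ : V → Tm F V) {p : List ℕ} {t u : Tm F V} (h : t.subAt p = some u) :
    (t.subst σ).subAt p = some (u.subst σ) := by
  induction p generalizing t with
  | nil => simp_all
  | cons i p ih =>
    rcases t with x | ⟨f, ts⟩
    · simp at h
    · rw [subAt_app_cons, Option.bind_eq_some_iff] at h
      obtain ⟨w, hw, hwu⟩ := h
      rw [subst_app, subAt_app_cons, List.getElem?_map, hw]
      exact ih hwu

theorem exists_subAt_of_mem_varList {x : V} :
    ∀ {t : Tm F V}, x ∈ t.varList → ∃ p, t.subAt p = some (var x)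
  | var y, h => by
    rw [varList_var, List.mem_singleton] at h
    exact ⟨[], by simp [h]⟩
  | app f ts, h => by
    rw [varList_app] at h
    simp only [List.mem_flatten, List.mem_map] at h
    obtain ⟨_, ⟨s, hs, rfl⟩, hx⟩ := h
    obtain ⟨p, hp⟩ := exists_subAt_of_mem_varList hx
    obtain ⟨i, hi⟩ := List.getElem?_of_mem hs
    exact ⟨i :: p, by rw [subAt_app_cons, hi, Option.bind_some, hp]⟩
termination_by t => sizeOf t
decreasing_by have := List.sizeOf_lt_of_mem hs; simp_wf; omega

theorem finite_setOf_isSome_subAt_singleton (t : Tm F V) :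
    {j | (t.subAt [j]).isSome}.Finite := by
  rcases t with x | ⟨f, ts⟩
  · simp
  · refine (Set.finite_lt_nat ts.length).subset fun j hj => ?_
    simpa [subAt_app_cons] using hj

end Tm

section Relations

open Relation Filter

variable {α : Type*} {A B : α → α → Prop}

theorem exists_seq_of_reflTransGen {x y : α} (h : ReflTransGen A x y) :
    ∃ (seg : ℕ → α) (len : ℕ), seg 0 = x ∧ seg len = y ∧ ∀ i < len, A (seg i) (seg (i + 1)) := by
  induction h using ReflTransGen.head_induction_on with
  | refl => exact ⟨fun _ => y, 0, rfl, rfl, by simp⟩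
  | head hxz _ ih =>
    obtain ⟨seg, len, h0, hlen, hA⟩ := ih
    refine ⟨fun | 0 => _ | i + 1 => seg i, len + 1, rfl, hlen, ?_⟩
    rintro (_ | i) hi
    · simpa [h0] using hxz
    · exact hA i (by omega)

theorem exists_seq_of_segments (seg : ℕ → ℕ → α) (len : ℕ → ℕ)
    (hA : ∀ n, ∀ i < len n, A (seg n i) (seg n (i + 1)))
    (hB : ∀ n, B (seg n (len n)) (seg (n + 1) 0)) :
    ∃ g : ℕ → α, g 0 = seg 0 0 ∧ (∀ m, A (g m) (g (m + 1)) ∨ B (g m) (g (m + 1))) ∧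
      ∃ᶠ m in atTop, B (g m) (g (m + 1)) := by
  let next : ℕ × ℕ → ℕ × ℕ := fun c => if c.2 < len c.1 then (c.1, c.2 + 1) else (c.1 + 1, 0)
  let st : ℕ → ℕ × ℕ := fun m => next^[m] (0, 0)
  have st_succ (m : ℕ) : st (m + 1) = next (st m) := Function.iterate_succ_apply' ..
  have hle (m : ℕ) : (st m).2 ≤ len (st m).1 := by
    induction m with
    | zero => simp [st]
    | succ m ih =>
      rw [st_succ]
      simp only [next]
      split_ifs with h
      exacts [h, Nat.zero_le _]
  have hstepB (m : ℕ) (hm : ¬ (st m).2 < len (st m).1) :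
      B (seg (st m).1 (st m).2) (seg (st (m + 1)).1 (st (m + 1)).2) := by
    rw [st_succ]
    simp only [next, if_neg hm]
    rw [show (st m).2 = len (st m).1 by have := hle m; omega]
    exact hB _
  have hend : ∃ᶠ m in atTop, ¬ (st m).2 < len (st m).1 := by
    rw [frequently_atTop]
    intro m₀
    by_contra! H
    have hrun (d : ℕ) : st (m₀ + d) = ((st m₀).1, (st m₀).2 + d) := by
      induction d with
      | zero => rfl
      | succ d ih =>
        have hlt : (st m₀).2 + d < len (st m₀).1 := by simpa [ih] using H (m₀ + d) (by omega)
        rw [← add_assoc, st_succ]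
        simp only [next, ih, if_pos hlt]
        rfl
    have := H (m₀ + len (st m₀).1) (by omega)
    simp only [hrun] at this
    omega
  refine ⟨fun m => seg (st m).1 (st m).2, rfl, fun m => ?_, hend.mono hstepB⟩
  by_cases hm : (st m).2 < len (st m).1
  · left
    dsimp only
    rw [st_succ]
    simp only [next, if_pos hm]
    exact hA _ _ hm
  · exact .inr (hstepB m hm)

theorem exists_seq_of_modStep_seq {f : ℕ → α}
    (hf : ∀ n, ∃ u v, ReflTransGen A (f n) u ∧ B u v ∧ ReflTransGen A v (f (n + 1))) :
    ∃ g : ℕ → α, g 0 = f 0 ∧ (∀ m, A (g m) (g (m + 1)) ∨ B (g m) (g (m + 1))) ∧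
      ∃ᶠ m in atTop, B (g m) (g (m + 1)) := by
  choose u v hu huv hv using hf
  let c : ℕ → α := fun | 0 => f 0 | n + 1 => v n
  have hc : ∀ n, ReflTransGen A (c n) (u n)
    | 0 => hu 0
    | n + 1 => (hv n).trans (hu (n + 1))
  choose seg len hseg0 hseglen hsegA using fun n => exists_seq_of_reflTransGen (hc n)
  obtain ⟨g, hg0, hg⟩ := exists_seq_of_segments seg len hsegA fun n => by
    rw [hseglen n, hseg0 (n + 1)]
    exact huv n
  exact ⟨g, hg0.trans (hseg0 0), hg⟩

theorem exists_modStep_seq_of_frequently {g : ℕ → α}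
    (hg : ∀ n, ReflTransGen A (g n) (g (n + 1)) ∨ B (g n) (g (n + 1)))
    (hB : ∃ᶠ n in atTop, B (g n) (g (n + 1))) :
    ∃ f : ℕ → α, f 0 = g 0 ∧
      ∀ k, ∃ u v, ReflTransGen A (f k) u ∧ B u v ∧ ReflTransGen A v (f (k + 1)) := by
  classical
  have hex (m : ℕ) : ∃ n, m ≤ n ∧ B (g n) (g (n + 1)) := frequently_atTop.1 hB m
  let next (m : ℕ) : ℕ := Nat.find (hex m)
  have hA (m n : ℕ) (hmn : m ≤ n) (hn : n ≤ next m) : ReflTransGen A (g m) (g n) := by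
    induction n, hmn using Nat.le_induction with
    | base => rfl
    | succ n hmn ih =>
      refine (ih (by omega)).trans ((hg n).resolve_right fun hB => ?_)
      exact Nat.find_min (hex m) (show n < next m by omega) ⟨hmn, hB⟩
  let idx (k : ℕ) : ℕ := (fun m => next m + 1)^[k] 0
  refine ⟨fun k => g (idx k), rfl, fun k => ⟨g (next (idx k)), g (next (idx k) + 1), ?_, ?_, ?_⟩⟩
  · exact hA _ _ (Nat.find_spec (hex _)).1 le_rfl
  · exact (Nat.find_spec (hex _)).2
  · show ReflTransGen A _ (g (idx (k + 1)))
    rw [show idx (k + 1) = next (idx k) + 1 from Function.iterate_succ_apply' ..]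

end Relations

section Termination

open Filter

variable {F V : Type} {R E : Set (Rule F V)}

theorem RewWith.append {l r : Tm F V} {q p : List ℕ} {σ : V → Tm F V} {s t : Tm F V}
    (h : RewWith l r (q ++ p) σ s t) :
    ∃ w w', s.subAt q = some w ∧ t.subAt q = some w' ∧ RewWith l r p σ w w' := by
  obtain ⟨hs, ht⟩ := h
  rw [Tm.subAt_append, Option.bind_eq_some_iff] at hs
  obtain ⟨w, hw, hwl⟩ := hs
  rw [Tm.replAt_append p _ hw, Option.bind_eq_some_iff] at ht
  obtain ⟨w', hw', hst⟩ := ht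
  exact ⟨w, w', hw, Tm.subAt_replAt hst, hwl, hw'⟩

theorem RewWith.rew_or_rew {r : Rule F V} {p : List ℕ} {σ : V → Tm F V} {s t : Tm F V}
    (h : RewWith r.lhs r.rhs p σ s t) (hr : r ∈ R ∪ E) : Rew E s t ∨ Rew R s t :=
  hr.symm.imp (⟨p, r, ·, σ, h⟩) (⟨p, r, ·, σ, h⟩)

theorem exists_seq_of_not_terminatingFrom {t : Tm F V} (h : ¬ TerminatingFrom R E t) :
    ∃ g : ℕ → Tm F V, g 0 = t ∧ (∀ n, Rew E (g n) (g (n + 1)) ∨ Rew R (g n) (g (n + 1))) ∧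
      ∃ᶠ n in atTop, Rew R (g n) (g (n + 1)) := by
  obtain ⟨f, rfl, hf⟩ := not_not.1 h
  exact exists_seq_of_modStep_seq hf

theorem not_terminatingFrom_of_frequently {g : ℕ → Tm F V}
    (hg : ∀ n, Reach E (g n) (g (n + 1)) ∨ Rew R (g n) (g (n + 1)))
    (hR : ∃ᶠ n in atTop, Rew R (g n) (g (n + 1))) (k : ℕ) : ¬ TerminatingFrom R E (g k) := by
  rw [← map_add_atTop_eq_nat k, frequently_map] at hR
  obtain ⟨f, hf0, hf⟩ := exists_modStep_seq_of_frequently (g := fun n => g (n + k))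
    (fun n => by rw [Nat.add_right_comm]; exact hg (n + k))
    (hR.mono fun n => by rw [Nat.add_right_comm]; exact id)
  exact fun h => h ⟨f, by simpa using hf0, hf⟩

theorem TerminatingFrom.of_rew {s t : Tm F V} (hs : TerminatingFrom R E s)
    (h : Rew E s t ∨ Rew R s t) : TerminatingFrom R E t := by
  intro ht
  obtain ⟨g, rfl, hg, hR⟩ := exists_seq_of_not_terminatingFrom (not_not.2 ht)
  refine not_terminatingFrom_of_frequently (g := fun | 0 => s | n + 1 => g n) ?_ ?_ 0 hs
  · rintro (_ | n)
    exacts [h.imp_left .single, (hg n).imp_left .single]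
  · exact (tendsto_add_atTop_nat 1).frequently hR

theorem exists_labelled_derivation {g : ℕ → Tm F V}
    (hg : ∀ n, Rew E (g n) (g (n + 1)) ∨ Rew R (g n) (g (n + 1))) :
    ∃ (rl : ℕ → Rule F V) (pp : ℕ → List ℕ) (sb : ℕ → V → Tm F V),
      (∀ n, rl n ∈ R ∪ E ∧ RewWith (rl n).lhs (rl n).rhs (pp n) (sb n) (g n) (g (n + 1))) ∧
      ∀ n, Rew R (g n) (g (n + 1)) → rl n ∈ R := by
  have (n : ℕ) : ∃ (r : Rule F V) (p : List ℕ) (σ : V → Tm F V),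
      (r ∈ R ∪ E ∧ RewWith r.lhs r.rhs p σ (g n) (g (n + 1))) ∧
        (Rew R (g n) (g (n + 1)) → r ∈ R) := by
    by_cases hR : Rew R (g n) (g (n + 1))
    · obtain ⟨p, r, hr, σ, h⟩ := hR
      exact ⟨r, p, σ, ⟨.inl hr, h⟩, fun _ => hr⟩
    · obtain ⟨p, r, hr, σ, h⟩ := (hg n).resolve_right hR
      exact ⟨r, p, σ, ⟨.inr hr, h⟩, hR.elim⟩
  choose rl pp sb h hR using this
  exact ⟨rl, pp, sb, h, hR⟩

def ProperSubtermsTerminating (R E : Set (Rule F V)) (t : Tm F V) : Prop :=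
  ∀ q u, q ≠ [] → t.subAt q = some u → TerminatingFrom R E u

theorem exists_minimal_nonterminating (h : ¬ Terminating R E) :
    ∃ t : Tm F V, ¬ TerminatingFrom R E t ∧ ProperSubtermsTerminating R E t := by
  obtain ⟨f, hf⟩ := not_not.1 h
  obtain ⟨t, ht, hmin⟩ := (measure fun t : Tm F V => sizeOf t).wf.has_min
    {t | ¬ TerminatingFrom R E t} ⟨f 0, fun h => h ⟨f, rfl, hf⟩⟩
  refine ⟨t, ht, fun q u hq hu => by_contra fun hnt => hmin u hnt ?_⟩
  obtain ⟨i, q, rfl⟩ := List.exists_cons_of_ne_nil hq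
  exact Tm.sizeOf_lt_of_subAt hu

theorem Rule.WF.exists_subAt_lhs_subst {r : Rule F V} (hwf : r.WF) {x : V}
    (hx : x ∈ r.lhs.varList) (σ : V → Tm F V) :
    ∃ q ≠ [], (r.lhs.subst σ).subAt q = some (σ x) := by
  obtain ⟨q, hq⟩ := Tm.exists_subAt_of_mem_varList hx
  refine ⟨q, ?_, by simpa using Tm.subAt_subst σ hq⟩
  rintro rfl
  exact hwf.1 x (by simpa using hq)

theorem Rule.WF.subAt_rhs_subst {r : Rule F V} (hwf : r.WF) (hflat : r.RightFlat)
    (σ : V → Tm F V) {q : List ℕ} {u : Tm F V} (hq : q ≠ [])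
    (h : (r.rhs.subst σ).subAt q = some u) :
    (∃ q' ≠ [], (r.lhs.subst σ).subAt q' = some u) ∨ ∃ c, u = Tm.app c [] := by
  have of_var {x : V} (hx : x ∈ r.rhs.varList) {p : List ℕ} (hp : (σ x).subAt p = some u) :
      ∃ q' ≠ [], (r.lhs.subst σ).subAt q' = some u := by
    obtain ⟨q₀, hq₀, h₀⟩ := hwf.exists_subAt_lhs_subst (hwf.2 x hx) σ
    exact ⟨q₀ ++ p, by simp [hq₀], by rw [Tm.subAt_append, h₀, Option.bind_some, hp]⟩
  rcases hr : r.rhs with x | ⟨f, as⟩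
  · rw [hr, Tm.subst_var] at h
    exact .inl (of_var (by simp [hr]) h)
  obtain ⟨j, q, rfl⟩ := List.exists_cons_of_ne_nil hq
  rw [hr, Tm.subst_app, Tm.subAt_app_cons, List.getElem?_map] at h
  cases hj : as[j]? with
  | none => simp [hj] at h
  | some a =>
    rw [hj, Option.map_some, Option.bind_some] at h
    have ha := List.mem_of_getElem? hj
    have hflat' : (Tm.app f as).Flat := hr ▸ hflat
    rcases hflat'.var_or_const_of_mem ha with ⟨x, rfl⟩ | ⟨c, rfl⟩
    · rw [Tm.subst_var] at h
      refine .inl (of_var ?_ h)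
      rw [hr, Tm.varList_app]
      exact List.mem_flatten.2 ⟨_, List.mem_map_of_mem ha, by simp⟩
    · right
      rcases q with _ | ⟨i, q⟩
      · exact ⟨c, by simpa [Tm.subst_app] using h.symm⟩
      · simp [Tm.subst_app, Tm.subAt_app_cons] at h

theorem ProperSubtermsTerminating.of_rewWith
    (hconst : ∀ c : F, TerminatingFrom R E (Tm.app c [])) {r : Rule F V} (hr : r ∈ R ∪ E)
    (hwf : r.WF) (hflat : r.RightFlat) {p : List ℕ} {σ : V → Tm F V} {s t : Tm F V}
    (h : RewWith r.lhs r.rhs p σ s t) (hs : ProperSubtermsTerminating R E s) :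
    ProperSubtermsTerminating R E t := by
  intro q u hq hu
  by_cases hqp : q <+: p
  · obtain ⟨p, rfl⟩ := hqp
    obtain ⟨w, w', hw, hw', hstep⟩ := h.append
    obtain rfl : w' = u := Option.some_inj.1 (hw'.symm.trans hu)
    exact (hs q w hq hw).of_rew (hstep.rew_or_rew hr)
  by_cases hpq : p <+: q
  · obtain ⟨q', rfl⟩ := hpq
    have hq' : q' ≠ [] := by
      rintro rfl
      exact hqp (by simp)
    rw [Tm.subAt_append, Tm.subAt_replAt h.2, Option.bind_some] at hu
    rcases hwf.subAt_rhs_subst hflat σ hq' hu with ⟨q'', hq'', hsub⟩ | ⟨c, rfl⟩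
    · exact hs (p ++ q'') u (by simp [hq''])
        (by rw [Tm.subAt_append, h.1, Option.bind_some, hsub])
    · exact hconst c
  · exact hs q u hq (Tm.subAt_replAt_of_not_prefix h.2 hpq hqp ▸ hu)

theorem not_collapsing_of_rewWith_nil {r : Rule F V} (hwf : r.WF) {σ : V → Tm F V}
    {s t : Tm F V} (h : RewWith r.lhs r.rhs [] σ s t) (hs : ProperSubtermsTerminating R E s)
    (ht : ¬ TerminatingFrom R E t) : ¬ r.Collapsing := by
  rintro ⟨x, hx⟩
  obtain ⟨q, hq, hsub⟩ := hwf.exists_subAt_lhs_subst (hwf.2 x (by simp [hx])) σ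
  obtain ⟨hs₀, ht₀⟩ := h
  simp only [Tm.subAt_nil, Tm.replAt_nil, Option.some_inj] at hs₀ ht₀
  subst hs₀ ht₀
  rw [hx, Tm.subst_var] at ht
  exact ht (hs q _ hq hsub)

end Termination

section RootSteps

open Filter

variable {F V : Type} {R E : Set (Rule F V)}

theorem exists_nonterminating_arg {f : ℕ → Tm F V} {rl : ℕ → Rule F V} {pp : ℕ → List ℕ}
    {sb : ℕ → V → Tm F V}
    (hstep : ∀ n, rl n ∈ R ∪ E ∧ RewWith (rl n).lhs (rl n).rhs (pp n) (sb n) (f n) (f (n + 1)))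
    (hR : ∃ᶠ n in atTop, rl n ∈ R) (hpp : ∀ n, pp n ≠ []) :
    ∃ j u, (f 0).subAt [j] = some u ∧ ¬ TerminatingFrom R E u := by
  choose J P hJP using fun n => List.exists_cons_of_ne_nil (hpp n)
  choose w w' hw hw' hww' using fun n =>
    (show RewWith _ _ ([J n] ++ P n) _ _ _ from hJP n ▸ (hstep n).2).append
  have hother (n j : ℕ) (hj : j ≠ J n) : (f (n + 1)).subAt [j] = (f n).subAt [j] :=
    Tm.subAt_replAt_of_not_prefix (hstep n).2.2 (by simp [hJP n, Ne.symm hj]) (by simp [hJP n, hj])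
  have hsome (n j : ℕ) : ((f n).subAt [j]).isSome = ((f 0).subAt [j]).isSome := by
    induction n with
    | zero => rfl
    | succ n ih =>
      rw [← ih]
      by_cases hj : j = J n
      · rw [hj, hw n, hw' n]
        rfl
      · rw [hother n j hj]
  obtain ⟨j, hj, hjR⟩ := (frequently_exists_finite (p := fun j n => rl n ∈ R ∧ J n = j)
    (Tm.finite_setOf_isSome_subAt_singleton (f 0))).1 <|
    hR.mono fun n hn => ⟨J n, by simp [← hsome n, hw n], hn, rfl⟩
  choose a ha using fun n => Option.isSome_iff_exists.1 ((hsome n j).trans hj)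
  have hstep_a (n : ℕ) (hjn : J n = j) :
      RewWith (rl n).lhs (rl n).rhs (P n) (sb n) (a n) (a (n + 1)) := by
    rw [Option.some_inj.1 ((ha n).symm.trans (hjn ▸ hw n)),
      Option.some_inj.1 ((ha (n + 1)).symm.trans (hjn ▸ hw' n))]
    exact hww' n
  refine ⟨j, a 0, ha 0, not_terminatingFrom_of_frequently (g := a) (fun n => ?_) ?_ 0⟩
  · by_cases hjn : J n = j
    · exact ((hstep_a n hjn).rew_or_rew (hstep n).1).imp_left .single
    · left
      rw [Option.some_inj.1 (((ha (n + 1)).symm.trans (hother n j (Ne.symm hjn))).trans (ha n))]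
      exact .refl
  · exact hjR.mono fun n hn => ⟨P n, rl n, hn.1, sb n, hstep_a n hn.2⟩

theorem frequently_root_step {f : ℕ → Tm F V} {rl : ℕ → Rule F V} {pp : ℕ → List ℕ}
    {sb : ℕ → V → Tm F V}
    (hstep : ∀ n, rl n ∈ R ∪ E ∧ RewWith (rl n).lhs (rl n).rhs (pp n) (sb n) (f n) (f (n + 1)))
    (hR : ∃ᶠ n in atTop, rl n ∈ R) (hmin : ∀ n, ProperSubtermsTerminating R E (f n)) :
    ∃ᶠ n in atTop, pp n = [] := by
  by_contra hev
  obtain ⟨N, hN⟩ := eventually_atTop.1 (not_frequently.1 hev)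
  rw [← map_add_atTop_eq_nat N, frequently_map] at hR
  obtain ⟨j, u, hu, hnt⟩ := exists_nonterminating_arg (f := fun n => f (n + N))
    (fun n => by rw [Nat.add_right_comm]; exact hstep (n + N)) hR (fun n => hN _ (by omega))
  exact hnt (hmin N [j] u (by simp) (by simpa using hu))

end RootSteps

/-- If `R/E` is non-terminating (with `R` right-flat right-linear, `E`
permutative) and no non-terminating `R/E`-derivation starts from a constant, then there
is an infinite `R ∪ E`-derivation with infinitely many `R`-steps such that
(a) no infinite `R/E`-derivation starts from a proper subterm of `t₀`,
(b) no collapsing rule is applied at the root, and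
(c) infinitely many steps occur at the root. -/
theorem stmt10 {F V : Type} (R E : Set (Rule F V))
    (hR : ∀ r ∈ R, r.RightFlat ∧ r.RightLinear) (hRwf : ∀ r ∈ R, r.WF)
    (hE : PermutativeTheory E)
    (hnt : ¬ Terminating R E)
    (hconst : ∀ c : F, TerminatingFrom R E (Tm.app c [])) :
    ∃ (f : ℕ → Tm F V) (rl : ℕ → Rule F V) (pp : ℕ → List ℕ) (sb : ℕ → V → Tm F V),
      (∀ n, rl n ∈ R ∪ E ∧ RewWith (rl n).lhs (rl n).rhs (pp n) (sb n) (f n) (f (n + 1))) ∧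
      (∀ N, ∃ n ≥ N, rl n ∈ R) ∧
      (∀ (q : List ℕ) (u : Tm F V), q ≠ [] → (f 0).subAt q = some u →
        TerminatingFrom R E u) ∧
      (∀ n, pp n = [] → ¬ (rl n).Collapsing) ∧
      (∀ N, ∃ n ≥ N, pp n = []) := by
  have hRE : ∀ r ∈ R ∪ E, r.WF ∧ r.RightFlat := by
    rintro r (hr | hr)
    · exact ⟨hRwf r hr, (hR r hr).1⟩
    · obtain ⟨hwf, -, -, -, hflat, -⟩ := hE.1 r hr
      exact ⟨hwf, hflat⟩
  obtain ⟨t₀, hnt₀, hmin₀⟩ := exists_minimal_nonterminating hnt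
  obtain ⟨f, rfl, hf, hfR⟩ := exists_seq_of_not_terminatingFrom hnt₀
  obtain ⟨rl, pp, sb, hstep, hlabel⟩ := exists_labelled_derivation hf
  have hmin (n : ℕ) : ProperSubtermsTerminating R E (f n) := by
    induction n with
    | zero => exact hmin₀
    | succ n ih =>
      obtain ⟨hwf, hflat⟩ := hRE _ (hstep n).1
      exact ih.of_rewWith hconst (hstep n).1 hwf hflat (hstep n).2
  have hrlR : ∃ᶠ n in Filter.atTop, rl n ∈ R := hfR.mono hlabel
  refine ⟨f, rl, pp, sb, hstep, Filter.frequently_atTop.1 hrlR, hmin₀, fun n hn => ?_,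
    Filter.frequently_atTop.1 (frequently_root_step hstep hrlR hmin)⟩
  refine not_collapsing_of_rewWith_nil (hRE _ (hstep n).1).1 (hn ▸ (hstep n).2) (hmin n) ?_
  exact not_terminatingFrom_of_frequently (fun n => (hf n).imp_left .single) hfR (n + 1)
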